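/- arXiv:1202.1542 — 4 statements merged into one kernel-verified Lean document; each statement's English description precedes it below -/
import Mathlib

section
/- Av(123)𝒜 = Av(13254, 14253, 15243). -/
/-- A permutation of length `n` (a bijection of `{0, …, n-1}`, identified with the
sequence of its values), packaged with its length. -/
abbrev PermSig : Type := Σ n : ℕ, Equiv.Perm (Fin n)

/-- Pattern containment: the permutation `α` of length `k` is contained in the
permutation `τ` of length `n` if there is an increasing choice of positions on which
`τ` is order-isomorphic to `α`. -/
def Contains {k n : ℕ} (α : Equiv.Perm (Fin k)) (τ : Equiv.Perm (Fin n)) : Prop :=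
  ∃ f : Fin k ↪o Fin n, ∀ i j : Fin k, α i < α j ↔ τ (f i) < τ (f j)

/-- The avoidance class `Av B`: all permutations containing no member of `B`. -/
def Av (B : Set PermSig) : Set PermSig :=
  {τ : PermSig | ∀ β ∈ B, ¬ Contains β.2 τ.2}

/-- A pattern class: a set of permutations downward closed under pattern containment. -/
def IsPatternClass (C : Set PermSig) : Prop :=
  ∀ (k n : ℕ) (α : Equiv.Perm (Fin k)) (τ : Equiv.Perm (Fin n)),
    Contains α τ → (⟨n, τ⟩ : PermSig) ∈ C → (⟨k, α⟩ : PermSig) ∈ C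

/-- The base relation of the poset `P(τ)` on values: `x ≺ y` whenever `x` appears
before `y` in `τ` and either `x > y`, or some value `z` appears between `x` and `y`
in `τ` with `x < y < z`. -/
def PQBase {n : ℕ} (τ : Equiv.Perm (Fin n)) (x y : Fin n) : Prop :=
  τ.symm x < τ.symm y ∧
    (y < x ∨ ∃ z : Fin n, τ.symm x < τ.symm z ∧ τ.symm z < τ.symm y ∧ x < y ∧ y < z)

/-- The poset `P(τ)`: the transitive closure of the base relation. -/
def PQ {n : ℕ} (τ : Equiv.Perm (Fin n)) : Fin n → Fin n → Prop :=
  Relation.TransGen (PQBase τ)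

/-- `σ` is a linear extension of `P(τ)`; equivalently, `(σ, τ)` is an allowable pair,
i.e. a priority queue can produce output `τ` from input `σ`. -/
def Allowable {n : ℕ} (σ τ : Equiv.Perm (Fin n)) : Prop :=
  ∀ x y : Fin n, PQ τ x y → σ.symm x < σ.symm y

/-- `C𝒜`: the set of permutations obtainable by a priority queue from an input in `C`. -/
def ImageA (C : Set PermSig) : Set PermSig :=
  {τ : PermSig | ∃ σ : Equiv.Perm (Fin τ.1), (⟨τ.1, σ⟩ : PermSig) ∈ C ∧ Allowable σ τ.2}

/-- The pattern `123` (written 0-indexed). -/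
noncomputable def p123 : Equiv.Perm (Fin 3) :=
  Equiv.ofBijective (![0, 1, 2] : Fin 3 → Fin 3) (by decide)

/-- The pattern `13254` (written 0-indexed). -/
noncomputable def p13254 : Equiv.Perm (Fin 5) :=
  Equiv.ofBijective (![0, 2, 1, 4, 3] : Fin 5 → Fin 5) (by decide)

/-- The pattern `14253` (written 0-indexed). -/
noncomputable def p14253 : Equiv.Perm (Fin 5) :=
  Equiv.ofBijective (![0, 3, 1, 4, 2] : Fin 5 → Fin 5) (by decide)

/-- The pattern `15243` (written 0-indexed). -/
noncomputable def p15243 : Equiv.Perm (Fin 5) :=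
  Equiv.ofBijective (![0, 4, 1, 3, 2] : Fin 5 → Fin 5) (by decide)

section Aux

variable {n : ℕ}

lemma pqbase_pos {τ : Equiv.Perm (Fin n)} {x y : Fin n} (h : PQBase τ x y) :
    τ.symm x < τ.symm y := h.1

lemma pqbase_ne {τ : Equiv.Perm (Fin n)} {x y : Fin n} (h : PQBase τ x y) : x ≠ y := by
  rintro rfl; exact lt_irrefl _ h.1

lemma pqbase_trans {τ : Equiv.Perm (Fin n)} {x y z : Fin n}
    (h1 : PQBase τ x y) (h2 : PQBase τ y z) : PQBase τ x z := by
  obtain ⟨p1, d1⟩ := h1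
  obtain ⟨p2, d2⟩ := h2
  refine ⟨p1.trans p2, ?_⟩
  have hxz : x ≠ z := by rintro rfl; exact lt_irrefl _ (p1.trans p2)
  rcases d1 with hyx | ⟨w, hw1, hw2, hxy, hyw⟩
  · rcases d2 with hzy | ⟨w, hw1, hw2, hyz, hzw⟩
    · exact Or.inl (hzy.trans hyx)
    · rcases lt_or_gt_of_ne hxz with hlt | hgt
      · exact Or.inr ⟨w, p1.trans hw1, hw2, hlt, hzw⟩
      · exact Or.inl hgt
  · rcases d2 with hzy | ⟨w', hw1', hw2', hyz, hzw'⟩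
    · rcases lt_or_gt_of_ne hxz with hlt | hgt
      · exact Or.inr ⟨w, hw1, hw2.trans p2, hlt, hzy.trans hyw⟩
      · exact Or.inl hgt
    · exact Or.inr ⟨w', p1.trans hw1', hw2', hxy.trans hyz, hzw'⟩

lemma pq_iff_pqbase {τ : Equiv.Perm (Fin n)} {x y : Fin n} :
    PQ τ x y ↔ PQBase τ x y := by
  constructor
  · intro h
    induction h with
    | single h => exact h
    | tail _ h2 ih => exact pqbase_trans ih h2
  · exact Relation.TransGen.single

end Aux
section Aux2

variable {n : ℕ}

lemma strictMono_vec5 {α : Type*} [Preorder α] {a b c d e : α}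
    (h1 : a < b) (h2 : b < c) (h3 : c < d) (h4 : d < e) :
    StrictMono (![a,b,c,d,e] : Fin 5 → α) := by
  have h12 := h1.trans h2
  have h23 := h2.trans h3
  have h34 := h3.trans h4
  have h13 := h12.trans h3
  have h24 := h23.trans h4
  have h14 := h13.trans h4
  intro i j hij
  fin_cases i <;> fin_cases j <;>
    first
      | exact absurd hij (by decide)
      | simpa using h1
      | simpa using h2
      | simpa using h3
      | simpa using h4
      | simpa using h12
      | simpa using h23
      | simpa using h34
      | simpa using h13
      | simpa using h24
      | simpa using h14

lemma strictMono_vec3 {α : Type*} [Preorder α] {a b c : α}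
    (h1 : a < b) (h2 : b < c) :
    StrictMono (![a,b,c] : Fin 3 → α) := by
  have h12 := h1.trans h2
  intro i j hij
  fin_cases i <;> fin_cases j <;>
    first
      | exact absurd hij (by decide)
      | simpa using h1
      | simpa using h2
      | simpa using h12

lemma contains_of_rank {k : ℕ} (pat : Equiv.Perm (Fin k)) (τ : Equiv.Perm (Fin n))
    (q s : Fin k → Fin n) (hq : StrictMono q) (hs : StrictMono s)
    (hw : ∀ i, τ (q i) = s (pat i)) : Contains pat τ := by
  refine ⟨OrderEmbedding.ofStrictMono q hq, fun i j => ?_⟩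
  rw [show ((OrderEmbedding.ofStrictMono q hq) i) = q i from rfl, show ((OrderEmbedding.ofStrictMono q hq) j) = q j from rfl, hw i, hw j]
  exact Iff.symm hs.lt_iff_lt

/-- An increasing 3-chain in the base relation yields one of the three patterns. -/
lemma chain_pattern {τ : Equiv.Perm (Fin n)} {x y z : Fin n}
    (hxy : x < y) (hyz : y < z) (h1 : PQBase τ x y) (h2 : PQBase τ y z) :
    Contains p13254 τ ∨ Contains p14253 τ ∨ Contains p15243 τ := by
  obtain ⟨p1, d1⟩ := h1
  obtain ⟨p2, d2⟩ := h2
  rcases d1 with hyx | ⟨u, hu1, hu2, _, hyu⟩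
  · exact absurd hxy (not_lt_of_gt hyx)
  rcases d2 with hzy | ⟨v, hv1, hv2, _, hzv⟩
  · exact absurd hyz (not_lt_of_gt hzy)
  -- positions: τ.symm x < τ.symm u < τ.symm y < τ.symm v < τ.symm z
  have hq : StrictMono (![τ.symm x, τ.symm u, τ.symm y, τ.symm v, τ.symm z] : Fin 5 → Fin n) :=
    strictMono_vec5 hu1 hu2 hv1 hv2
  have huz : u ≠ z := by
    intro h; rw [h] at hu2; exact absurd (hu2.trans p2) (lt_irrefl _)
  have huv : u ≠ v := by
    intro h; rw [h] at hu2; exact absurd (hu2.trans hv1) (lt_irrefl _)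
  rcases lt_or_gt_of_ne huz with huz' | huz'
  · -- values x<y<u<z<v : pattern 13254
    left
    refine contains_of_rank _ _ _ (![x,y,u,z,v]) hq
      (strictMono_vec5 hxy hyu huz' hzv) ?_
    intro i; fin_cases i <;> simp [p13254]
  · rcases lt_or_gt_of_ne huv with huv' | huv'
    · -- values x<y<z<u<v : pattern 14253
      right; left
      refine contains_of_rank _ _ _ (![x,y,z,u,v]) hq
        (strictMono_vec5 hxy hyz huz' huv') ?_
      intro i; fin_cases i <;> simp [p14253]
    · -- values x<y<z<v<u : pattern 15243
      right; right
      refine contains_of_rank _ _ _ (![x,y,z,v,u]) hq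
        (strictMono_vec5 hxy hyz hzv huv') ?_
      intro i; fin_cases i <;> simp [p15243]

end Aux2
section PartA

variable {n : ℕ}

lemma partA {σ τ : Equiv.Perm (Fin n)} (hal : Allowable σ τ)
    (pat : Equiv.Perm (Fin 5))
    (h02 : pat 0 < pat 2) (h21 : pat 2 < pat 1)
    (h24 : pat 2 < pat 4) (h43 : pat 4 < pat 3)
    (hc : Contains pat τ) : Contains p123 σ := by
  obtain ⟨f, hf⟩ := hc
  have hac : τ (f 0) < τ (f 2) := (hf 0 2).1 h02
  have hcb : τ (f 2) < τ (f 1) := (hf 2 1).1 h21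
  have hce : τ (f 2) < τ (f 4) := (hf 2 4).1 h24
  have hed : τ (f 4) < τ (f 3) := (hf 4 3).1 h43
  have hpos : ∀ i : Fin 5, τ.symm (τ (f i)) = f i := fun i => Equiv.symm_apply_apply τ _
  have base1 : PQBase τ (τ (f 0)) (τ (f 2)) := by
    refine ⟨?_, Or.inr ⟨τ (f 1), ?_, ?_, hac, hcb⟩⟩ <;>
      · simp only [hpos]
        exact f.lt_iff_lt.2 (by decide)
  have base2 : PQBase τ (τ (f 2)) (τ (f 4)) := by
    refine ⟨?_, Or.inr ⟨τ (f 3), ?_, ?_, hce, hed⟩⟩ <;>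
      · simp only [hpos]
        exact f.lt_iff_lt.2 (by decide)
  have h1 : σ.symm (τ (f 0)) < σ.symm (τ (f 2)) := hal _ _ (Relation.TransGen.single base1)
  have h2 : σ.symm (τ (f 2)) < σ.symm (τ (f 4)) := hal _ _ (Relation.TransGen.single base2)
  refine contains_of_rank p123 σ (![σ.symm (τ (f 0)), σ.symm (τ (f 2)), σ.symm (τ (f 4))])
    (![τ (f 0), τ (f 2), τ (f 4)])
    (strictMono_vec3 h1 h2) (strictMono_vec3 hac hce) ?_
  intro i; fin_cases i <;> simp [p123]

end PartA
section PartB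

open Classical in
/-- The set of values above `x` that are forced after `x`. -/
noncomputable def targets {n : ℕ} (τ : Equiv.Perm (Fin n)) (x : Fin n) : Finset (Fin n) :=
  Finset.univ.filter (fun y => x < y ∧ PQBase τ x y)

/-- The key function: sorting values by decreasing key gives the desired input. -/
noncomputable def KK {n : ℕ} (τ : Equiv.Perm (Fin n)) (x : Fin n) : ℕ :=
  if h : (targets τ x).Nonempty then 2*n*((targets τ x).max' h : ℕ) + n + x else 2*n*x + x

variable {n : ℕ} {τ : Equiv.Perm (Fin n)}

lemma mem_targets {x y : Fin n} : y ∈ targets τ x ↔ x < y ∧ PQBase τ x y := by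
  classical
  simp [targets]

lemma target_spec {x : Fin n} (h : (targets τ x).Nonempty) :
    x < (targets τ x).max' h ∧ PQBase τ x ((targets τ x).max' h) :=
  mem_targets.1 ((targets τ x).max'_mem h)

lemma KK_pos {x : Fin n} (h : (targets τ x).Nonempty) :
    KK τ x = 2*n*((targets τ x).max' h : ℕ) + n + x := dif_pos h

lemma KK_neg {x : Fin n} (h : ¬ (targets τ x).Nonempty) :
    KK τ x = 2*n*x + x := dif_neg h

lemma mul_step {m a b : ℕ} (h : a < b) : 2*m*a + 2*m ≤ 2*m*b := by
  calc 2*m*a + 2*m = 2*m*(a+1) := by ring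
  _ ≤ 2*m*b := Nat.mul_le_mul_left _ h

/-- No increasing 3-chain in the base relation. -/
def NoChain (τ : Equiv.Perm (Fin n)) : Prop :=
  ∀ a b c : Fin n, a < b → b < c → PQBase τ a b → PQBase τ b c → False

/-- The key strictly decreases along the base relation. -/
lemma KK_lt (hnc : NoChain τ) {x y : Fin n} (h : PQBase τ x y) : KK τ y < KK τ x := by
  have hne : x ≠ y := pqbase_ne h
  have hxn : (x:ℕ) < n := x.isLt
  have hyn : (y:ℕ) < n := y.isLt
  by_cases hy : (targets τ y).Nonempty
  · obtain ⟨hyc, hbyc⟩ := target_spec hy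
    have hycv : (y:ℕ) < ((targets τ y).max' hy : ℕ) := hyc
    have hxc : PQBase τ x ((targets τ y).max' hy) := pqbase_trans h hbyc
    have hxcne : x ≠ (targets τ y).max' hy := pqbase_ne hxc
    rw [KK_pos hy]
    rcases lt_or_gt_of_ne hxcne with hlt | hgt
    · have hmem : (targets τ y).max' hy ∈ targets τ x := mem_targets.2 ⟨hlt, hxc⟩
      have hx : (targets τ x).Nonempty := ⟨_, hmem⟩
      have hCc : ((targets τ y).max' hy : ℕ) ≤ ((targets τ x).max' hx : ℕ) :=
        Finset.le_max' _ _ hmem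
      rw [KK_pos hx]
      rcases eq_or_lt_of_le hCc with heq | hlt2
      · have hxy' : ¬ x < y := fun hxy => hnc x y _ hxy hyc h hbyc
        have hyx : (y:ℕ) < (x:ℕ) := (lt_or_gt_of_ne hne).resolve_left hxy'
        have keyeq : 2*n*(((targets τ y).max' hy : Fin n) : ℕ)
            = 2*n*(((targets τ x).max' hx : Fin n) : ℕ) := by rw [heq]
        omega
      · have key := mul_step (m := n) hlt2
        omega
    · have hcx : (((targets τ y).max' hy : Fin n) : ℕ) < (x:ℕ) := hgt
      by_cases hx : (targets τ x).Nonempty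
      · obtain ⟨hxC, _⟩ := target_spec hx
        have hxCv : (x:ℕ) < ((targets τ x).max' hx : ℕ) := hxC
        rw [KK_pos hx]
        have key := mul_step (m := n) (lt_trans hcx hxCv)
        omega
      · rw [KK_neg hx]
        have key := mul_step (m := n) hcx
        omega
  · rw [KK_neg hy]
    rcases lt_or_gt_of_ne hne with hlt | hgt
    · have hmem : y ∈ targets τ x := mem_targets.2 ⟨hlt, h⟩
      have hx : (targets τ x).Nonempty := ⟨_, hmem⟩
      have hyC : (y:ℕ) ≤ ((targets τ x).max' hx : ℕ) := Finset.le_max' _ _ hmem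
      rw [KK_pos hx]
      have key := Nat.mul_le_mul_left (2*n) hyC
      omega
    · have hgt' : (y:ℕ) < (x:ℕ) := hgt
      by_cases hx : (targets τ x).Nonempty
      · obtain ⟨hxC, _⟩ := target_spec hx
        have hxCv : (x:ℕ) < ((targets τ x).max' hx : ℕ) := hxC
        rw [KK_pos hx]
        have key := mul_step (m := n) (lt_trans hgt' hxCv)
        omega
      · rw [KK_neg hx]
        have key := mul_step (m := n) hgt'
        omega

/-- The key is injective. -/
lemma KK_ne {x y : Fin n} (hxy : x < y) : KK τ x ≠ KK τ y := by
  have hxn : (x:ℕ) < n := x.isLt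
  have hyn : (y:ℕ) < n := y.isLt
  have hxyv : (x:ℕ) < (y:ℕ) := hxy
  by_cases hx : (targets τ x).Nonempty
  · obtain ⟨hxC, _⟩ := target_spec hx
    have hxCv : (x:ℕ) < ((targets τ x).max' hx : ℕ) := hxC
    rw [KK_pos hx]
    by_cases hy : (targets τ y).Nonempty
    · obtain ⟨hyc, _⟩ := target_spec hy
      have hycv : (y:ℕ) < ((targets τ y).max' hy : ℕ) := hyc
      rw [KK_pos hy]
      rcases lt_trichotomy ((targets τ x).max' hx : ℕ) ((targets τ y).max' hy : ℕ) with
        hlt | heq | hgt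
      · have key := mul_step (m := n) hlt; omega
      · have keyeq : 2*n*(((targets τ x).max' hx : Fin n) : ℕ)
            = 2*n*(((targets τ y).max' hy : Fin n) : ℕ) := by rw [heq]
        omega
      · have key := mul_step (m := n) hgt; omega
    · rw [KK_neg hy]
      rcases lt_trichotomy ((targets τ x).max' hx : ℕ) (y:ℕ) with hlt | heq | hgt
      · have key := mul_step (m := n) hlt; omega
      · have keyeq : 2*n*(((targets τ x).max' hx : Fin n) : ℕ) = 2*n*(y:ℕ) := by rw [heq]
        omega
      · have key := mul_step (m := n) hgt; omega
  · rw [KK_neg hx]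
    by_cases hy : (targets τ y).Nonempty
    · obtain ⟨hyc, _⟩ := target_spec hy
      have hycv : (y:ℕ) < ((targets τ y).max' hy : ℕ) := hyc
      rw [KK_pos hy]
      have key := mul_step (m := n) (lt_trans hxyv hycv)
      omega
    · rw [KK_neg hy]
      have key := mul_step (m := n) hxyv
      omega

lemma KK_injective : Function.Injective (KK τ) := by
  intro x y h
  by_contra hne
  rcases lt_or_gt_of_ne hne with hlt | hgt
  · exact KK_ne hlt h
  · exact KK_ne hgt h.symm

open Classical in
/-- Rank of `x` when sorting by decreasing key. -/
noncomputable def rnk (τ : Equiv.Perm (Fin n)) (x : Fin n) : ℕ :=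
  (Finset.univ.filter (fun y => KK τ x < KK τ y)).card

lemma rnk_lt (x : Fin n) : rnk τ x < n := by
  classical
  have hsub : (Finset.univ.filter (fun y => KK τ x < KK τ y)) ⊆ Finset.univ.erase x := by
    intro y hy
    rw [Finset.mem_filter] at hy
    refine Finset.mem_erase.2 ⟨?_, Finset.mem_univ _⟩
    rintro rfl
    exact lt_irrefl _ hy.2
  have hcard := Finset.card_le_card hsub
  rw [Finset.card_erase_of_mem (Finset.mem_univ _), Finset.card_univ, Fintype.card_fin] at hcard
  have hn : 0 < n := x.pos
  unfold rnk
  classical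
  omega

lemma rnk_lt_rnk {x y : Fin n} (h : KK τ y < KK τ x) : rnk τ x < rnk τ y := by
  classical
  apply Finset.card_lt_card
  rw [Finset.ssubset_iff_of_subset]
  · refine ⟨x, ?_, ?_⟩
    · simp [h]
    · simp
  · intro z hz
    rw [Finset.mem_filter] at hz ⊢
    exact ⟨hz.1, lt_trans h hz.2⟩

/-- The positions map: `x` goes to its rank. -/
noncomputable def toPos (τ : Equiv.Perm (Fin n)) (x : Fin n) : Fin n :=
  ⟨rnk τ x, rnk_lt x⟩

lemma toPos_lt_of_KK {x y : Fin n} (h : KK τ y < KK τ x) : toPos τ x < toPos τ y :=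
  rnk_lt_rnk h

lemma KK_of_toPos_lt {x y : Fin n} (h : toPos τ x < toPos τ y) : KK τ y < KK τ x := by
  rcases lt_trichotomy (KK τ y) (KK τ x) with hlt | heq | hgt
  · exact hlt
  · have : y = x := KK_injective heq
    subst this
    exact absurd h (lt_irrefl _)
  · exact absurd h (not_lt_of_gt (toPos_lt_of_KK hgt))

lemma toPos_injective : Function.Injective (toPos τ) := by
  intro x y h
  by_contra hne
  rcases lt_or_gt_of_ne (fun hK => hne (KK_injective hK) : KK τ x ≠ KK τ y) with hlt | hgt
  · exact absurd h (Fin.ne_of_lt (toPos_lt_of_KK hlt)).symm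
  · exact absurd h (Fin.ne_of_lt (toPos_lt_of_KK hgt))

lemma toPos_bijective : Function.Bijective (toPos τ) :=
  Finite.injective_iff_bijective.mp toPos_injective

end PartB
section PartB2

variable {n : ℕ} {τ : Equiv.Perm (Fin n)}

lemma no_rise_triple (hnc : NoChain τ) {x y z : Fin n} (hxy : x < y) (hyz : y < z)
    (hK1 : KK τ y < KK τ x) (hK2 : KK τ z < KK τ y) : False := by
  have hxn : (x:ℕ) < n := x.isLt
  have hyn : (y:ℕ) < n := y.isLt
  have hzn : (z:ℕ) < n := z.isLt
  have hxyv : (x:ℕ) < (y:ℕ) := hxy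
  have hyzv : (y:ℕ) < (z:ℕ) := hyz
  have hx : (targets τ x).Nonempty := by
    by_contra hx
    rw [KK_neg hx] at hK1
    by_cases hy : (targets τ y).Nonempty
    · rw [KK_pos hy] at hK1
      have hycv : (y:ℕ) < ((targets τ y).max' hy : ℕ) := (target_spec hy).1
      have key := mul_step (m := n) (lt_trans hxyv hycv)
      omega
    · rw [KK_neg hy] at hK1
      have key := mul_step (m := n) hxyv
      omega
  have hy : (targets τ y).Nonempty := by
    by_contra hy
    rw [KK_neg hy] at hK2
    by_cases hz : (targets τ z).Nonempty
    · rw [KK_pos hz] at hK2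
      have hzcv : (z:ℕ) < ((targets τ z).max' hz : ℕ) := (target_spec hz).1
      have key := mul_step (m := n) (lt_trans hyzv hzcv)
      omega
    · rw [KK_neg hz] at hK2
      have key := mul_step (m := n) hyzv
      omega
  obtain ⟨hxC, hbxC⟩ := target_spec hx
  obtain ⟨hyc, hbyc⟩ := target_spec hy
  have hxCv : (x:ℕ) < ((targets τ x).max' hx : ℕ) := hxC
  have hycv : (y:ℕ) < ((targets τ y).max' hy : ℕ) := hyc
  have step3 : ((targets τ y).max' hy : ℕ) < ((targets τ x).max' hx : ℕ) := by
    rw [KK_pos hx, KK_pos hy] at hK1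
    rcases lt_trichotomy ((targets τ y).max' hy : ℕ) ((targets τ x).max' hx : ℕ) with
      hlt | heq | hgt
    · exact hlt
    · have keyeq : 2*n*(((targets τ y).max' hy : Fin n) : ℕ)
          = 2*n*(((targets τ x).max' hx : Fin n) : ℕ) := by rw [heq]
      omega
    · have key := mul_step (m := n) hgt
      omega
  obtain ⟨hpxC, d⟩ := hbxC
  rcases d with hCx | ⟨u, hu1, hu2, _, hCu⟩
  · exact absurd hxC (not_lt_of_gt hCx)
  have hyCv : (y:ℕ) < ((targets τ x).max' hx : ℕ) := lt_trans hycv step3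
  have hCuv : (((targets τ x).max' hx : Fin n) : ℕ) < (u:ℕ) := hCu
  have hyu : (y:ℕ) < (u:ℕ) := lt_trans hyCv hCuv
  have hpney : τ.symm u ≠ τ.symm y := by
    intro hh
    have := τ.symm.injective hh
    rw [this] at hyu
    exact lt_irrefl _ hyu
  rcases lt_or_gt_of_ne hpney with hpu | hpu
  · -- u is positioned before y : witness for PQBase x y
    have hbxy : PQBase τ x y :=
      ⟨hu1.trans hpu, Or.inr ⟨u, hu1, hpu, hxy, Fin.lt_def.mpr hyu⟩⟩
    exact hnc x y _ hxy hyc hbxy hbyc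
  · -- u is positioned after y : witness for PQBase y C, contradicting maximality
    have hbyC : PQBase τ y ((targets τ x).max' hx) :=
      ⟨hpu.trans hu2, Or.inr ⟨u, hpu, hu2, Fin.lt_def.mpr hyCv, hCu⟩⟩
    have hmem : (targets τ x).max' hx ∈ targets τ y :=
      mem_targets.2 ⟨Fin.lt_def.mpr hyCv, hbyC⟩
    have hle : ((targets τ x).max' hx : Fin n) ≤ (targets τ y).max' hy :=
      Finset.le_max' _ _ hmem
    have hlev : (((targets τ x).max' hx : Fin n) : ℕ) ≤ ((targets τ y).max' hy : ℕ) :=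
      Fin.le_def.mp hle
    omega

lemma partB (hnc : NoChain τ) : ∃ σ : Equiv.Perm (Fin n), ¬ Contains p123 σ ∧ Allowable σ τ := by
  have hbij : Function.Bijective (toPos τ) := toPos_bijective
  refine ⟨(Equiv.ofBijective (toPos τ) hbij).symm, ?_, ?_⟩
  · rintro ⟨f, hf⟩
    set σ := (Equiv.ofBijective (toPos τ) hbij).symm with hσ
    have hsymm : ∀ w : Fin n, σ.symm w = toPos τ w := fun w => rfl
    have hv01 : σ (f 0) < σ (f 1) := (hf 0 1).1 (by decide)
    have hv12 : σ (f 1) < σ (f 2) := (hf 1 2).1 (by decide)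
    have hp : ∀ i : Fin 3, toPos τ (σ (f i)) = f i := by
      intro i
      rw [← hsymm]
      exact σ.symm_apply_apply _
    have hp01 : toPos τ (σ (f 0)) < toPos τ (σ (f 1)) := by
      rw [hp, hp]; exact f.lt_iff_lt.2 (by decide)
    have hp12 : toPos τ (σ (f 1)) < toPos τ (σ (f 2)) := by
      rw [hp, hp]; exact f.lt_iff_lt.2 (by decide)
    exact no_rise_triple hnc hv01 hv12 (KK_of_toPos_lt hp01) (KK_of_toPos_lt hp12)
  · intro x y hpq
    have hb : PQBase τ x y := pq_iff_pqbase.mp hpq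
    exact toPos_lt_of_KK (KK_lt hnc hb)

end PartB2
/-- `Av(123)𝒜 = Av(13254, 14253, 15243)`. -/
theorem imageA_av123 :
    ImageA (Av {(⟨3, p123⟩ : PermSig)}) = Av {(⟨5, p13254⟩ : PermSig), (⟨5, p14253⟩ : PermSig), (⟨5, p15243⟩ : PermSig)} := by
  ext τ0
  obtain ⟨n, τp⟩ := τ0
  constructor
  · rintro ⟨σ, hσAv, hal⟩
    intro β hβ hcont
    have h123 : ¬ Contains p123 σ := hσAv ⟨3, p123⟩ (Set.mem_singleton _)
    simp only [Set.mem_insert_iff, Set.mem_singleton_iff] at hβ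
    rcases hβ with rfl | rfl | rfl
    · exact h123 (partA hal p13254 (by decide) (by decide) (by decide) (by decide) hcont)
    · exact h123 (partA hal p14253 (by decide) (by decide) (by decide) (by decide) hcont)
    · exact h123 (partA hal p15243 (by decide) (by decide) (by decide) (by decide) hcont)
  · intro hAv
    have hnc : NoChain τp := by
      intro a b c hab hbc h1 h2
      rcases chain_pattern hab hbc h1 h2 with hc | hc | hc
      · exact hAv ⟨5, p13254⟩ (by simp) hc
      · exact hAv ⟨5, p14253⟩ (by simp) hc
      · exact hAv ⟨5, p15243⟩ (by simp) hc
    obtain ⟨σ, h1, h2⟩ := partB hnc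
    refine ⟨σ, ?_, h2⟩
    intro β hβ
    rw [Set.mem_singleton_iff] at hβ
    subst hβ
    exact h1
end

section
/- For every even m ≥ 6, every linear extension of P(τ_m) contains the pattern 2431; consequently τ_m ∉ Av(2431)𝒜. -/
/-- The pattern `2431` (written 0-indexed). -/
noncomputable def p2431 : Equiv.Perm (Fin 4) :=
  Equiv.ofBijective (![1, 3, 2, 0] : Fin 4 → Fin 4) (by decide)


/-- The values (0-indexed) of the permutation `τ_m` of length `m + 1`, namely
`2 (m+1) (4 1) (6 3) (8 5) … (m-4 m-7) m-2 m m-5 m-1 m-3` written 1-indexed. -/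
def tauFun (m : ℕ) : ℕ → ℕ := fun p =>
  if p = 0 then 1
  else if p = 1 then m
  else if p = m - 4 then m - 3
  else if p = m - 3 then m - 1
  else if p = m - 2 then m - 6
  else if p = m - 1 then m - 2
  else if p = m then m - 4
  else if p % 2 = 0 then p + 1
  else p - 3

lemma chain_contains {n : ℕ} (σ : Equiv.Perm (Fin n)) (w x y z : Fin n)
    (hzw : z < w) (hwy : w < y) (hyx : y < x)
    (h1 : σ.symm w < σ.symm x) (h2 : σ.symm x < σ.symm y) (h3 : σ.symm y < σ.symm z) :
    Contains p2431 σ := by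
  have hwx : w < x := hwy.trans hyx
  have hzy : z < y := hzw.trans hwy
  have hzx : z < x := hzy.trans hyx
  have h12 := h1.trans h2
  have h23 := h2.trans h3
  have h13 := h12.trans h3
  have hmono : StrictMono ![σ.symm w, σ.symm x, σ.symm y, σ.symm z] := by
    intro i j hij
    fin_cases i <;> fin_cases j <;> simp_all
  refine ⟨OrderEmbedding.ofStrictMono _ hmono, fun i j => ?_⟩
  fin_cases i <;> fin_cases j <;>
    simp [p2431, OrderEmbedding.ofStrictMono, Equiv.apply_symm_apply] <;>
    first
      | exact hwx | exact hwy | exact hzw.asymm | exact hyx | exact hzy.asymm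
      | exact hzx.asymm | exact hwx.asymm | exact hwy.asymm | exact hyx.asymm
      | exact hzw | exact hzy | exact hzx | exact hzw.le | exact hwx.le | exact hyx.le | exact hzx.le | exact hwy.le | exact hzy.le

set_option maxHeartbeats 2000000 in
/-- For every even `m ≥ 6`, every linear extension of `P(τ_m)` contains the pattern
`2431`; consequently `τ_m ∉ Av(2431)𝒜`. -/
theorem tau_not_mem_imageA_av2431 (m : ℕ) (hm : 6 ≤ m) (hme : Even m)
    (τ : Equiv.Perm (Fin (m + 1))) (hτ : ∀ p : Fin (m + 1), (τ p : ℕ) = tauFun m p) :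
    (∀ σ : Equiv.Perm (Fin (m + 1)), Allowable σ τ → Contains p2431 σ) ∧
    (⟨m + 1, τ⟩ : PermSig) ∉ ImageA (Av {(⟨4, p2431⟩ : PermSig)}) := by
  have hm2 : m % 2 = 0 := Nat.even_iff.mp hme
  -- embedding of naturals into Fin (m+1)
  have hmlt : ∀ v : ℕ, v ≤ m → v < m + 1 := fun v hv => by omega
  set F : ℕ → Fin (m + 1) := fun v => ⟨v % (m + 1), Nat.mod_lt _ (by omega)⟩ with hFdef
  have hF : ∀ v, v ≤ m → (F v : ℕ) = v := fun v hv => Nat.mod_eq_of_lt (by omega)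
  have hFlt : ∀ a b, a ≤ m → b ≤ m → (F a < F b ↔ a < b) := by
    intro a b ha hb; rw [Fin.lt_def, hF a ha, hF b hb]
  -- positions from hτ
  have hpos : ∀ p v, p ≤ m → v ≤ m → tauFun m p = v → τ.symm (F v) = F p := by
    intro p v hp hv h
    rw [Equiv.symm_apply_eq]
    apply Fin.ext
    rw [hτ, hF v hv, hF p hp, h]
  -- tauFun evaluations
  have ht0 : tauFun m 0 = 1 := by unfold tauFun; split_ifs <;> first | omega | exact ‹False›.elim
  have ht1 : tauFun m 1 = m := by unfold tauFun; split_ifs <;> first | omega | exact ‹False›.elim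
  have ht2 : tauFun m 2 = 3 := by unfold tauFun; split_ifs <;> first | omega | exact ‹False›.elim
  have ht3 : 8 ≤ m → tauFun m 3 = 0 := by intro h8; unfold tauFun; split_ifs <;> first | omega | exact ‹False›.elim
  have ht4 : m = 6 → tauFun m 4 = 0 := by intro h6; unfold tauFun; split_ifs <;> first | omega | exact ‹False›.elim
  have htm4 : tauFun m (m - 4) = m - 3 := by unfold tauFun; split_ifs <;> first | omega | exact ‹False›.elim
  have htm3 : tauFun m (m - 3) = m - 1 := by unfold tauFun; split_ifs <;> first | omega | exact ‹False›.elim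
  have htm2 : tauFun m (m - 2) = m - 6 := by unfold tauFun; split_ifs <;> first | omega | exact ‹False›.elim
  have htm1 : tauFun m (m - 1) = m - 2 := by unfold tauFun; split_ifs <;> first | omega | exact ‹False›.elim
  have htm : tauFun m m = m - 4 := by unfold tauFun; split_ifs <;> first | omega | exact ‹False›.elim
  have htodd : ∀ j, j % 2 = 1 → 3 ≤ j → j ≤ m - 3 → tauFun m (j - 1) = j := by
    intro j h1 h2 h3; unfold tauFun; split_ifs <;> first | omega | exact ‹False›.elim
  have hteven : ∀ v, v % 2 = 0 → v + 8 ≤ m → tauFun m (v + 3) = v := by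
    intro v h1 h2; unfold tauFun; split_ifs <;> first | omega | exact ‹False›.elim
  -- PQ facts (descents)
  have hdesc : ∀ px py x y, px ≤ m → py ≤ m → x ≤ m → y ≤ m → px < py → y < x →
      tauFun m px = x → tauFun m py = y → PQ τ (F x) (F y) := by
    intro px py x y hpx hpy hx hy hlt hyx h1 h2
    refine Relation.TransGen.single ⟨?_, Or.inl ((hFlt y x hy hx).mpr hyx)⟩
    rw [hpos px x hpx hx h1, hpos py y hpy hy h2]
    exact (hFlt px py hpx hpy).mpr hlt
  -- G3 : 1 ≺ m - 1 (witness z = m at position 1)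
  have hG3 : PQ τ (F 1) (F (m - 1)) := by
    refine Relation.TransGen.single ⟨?_, Or.inr ⟨F m, ?_, ?_, ?_, ?_⟩⟩
    · rw [hpos 0 1 (by omega) (by omega) ht0, hpos (m-3) (m-1) (by omega) (by omega) htm3]
      exact (hFlt 0 (m-3) (by omega) (by omega)).mpr (by omega)
    · rw [hpos 0 1 (by omega) (by omega) ht0, hpos 1 m (by omega) le_rfl ht1]
      exact (hFlt 0 1 (by omega) (by omega)).mpr (by omega)
    · rw [hpos 1 m (by omega) le_rfl ht1, hpos (m-3) (m-1) (by omega) (by omega) htm3]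
      exact (hFlt 1 (m-3) (by omega) (by omega)).mpr (by omega)
    · exact (hFlt 1 (m-1) (by omega) (by omega)).mpr (by omega)
    · exact (hFlt (m-1) m (by omega) le_rfl).mpr (by omega)
  have hG2 : PQ τ (F 3) (F 0) := by
    rcases Nat.lt_or_ge m 8 with h8 | h8
    · have h6 : m = 6 := by omega
      exact hdesc 2 4 3 0 (by omega) (by omega) (by omega) (by omega) (by omega) (by omega)
        ht2 (ht4 h6)
    · exact hdesc 2 3 3 0 (by omega) (by omega) (by omega) (by omega) (by omega) (by omega)
        ht2 (ht3 h8)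
  have hG4 : PQ τ (F (m-1)) (F (m-2)) :=
    hdesc (m-3) (m-1) (m-1) (m-2) (by omega) (by omega) (by omega) (by omega) (by omega)
      (by omega) htm3 htm1
  have hG5 : PQ τ (F (m-2)) (F (m-4)) :=
    hdesc (m-1) m (m-2) (m-4) (by omega) le_rfl (by omega) (by omega) (by omega) (by omega)
      htm1 htm
  have hG6 : PQ τ (F (m-3)) (F (m-6)) :=
    hdesc (m-4) (m-2) (m-3) (m-6) (by omega) (by omega) (by omega) (by omega) (by omega)
      (by omega) htm4 htm2
  have hG7 : ∀ j, j % 2 = 1 → 3 ≤ j → j ≤ m - 5 → PQ τ (F (j + 2)) (F (j - 1)) := by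
    intro j hj1 hj2 hj3
    have hj2' : tauFun m (j + 2 - 1) = j + 2 := htodd (j + 2) (by omega) (by omega) (by omega)
    have e1 : j + 2 - 1 = j + 1 := by omega
    rw [e1] at hj2'
    rcases Nat.lt_or_ge j (m - 5) with hlt | hge
    · have hj1' : tauFun m (j - 1 + 3) = j - 1 := hteven (j - 1) (by omega) (by omega)
      have e2 : j - 1 + 3 = j + 2 := by omega
      rw [e2] at hj1'
      exact hdesc (j+1) (j+2) (j+2) (j-1) (by omega) (by omega) (by omega) (by omega)
        (by omega) (by omega) hj2' hj1'
    · have hje : j = m - 5 := by omega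
      have e3 : j + 2 = m - 3 := by omega
      have e4 : j - 1 = m - 6 := by omega
      rw [e3, e4]
      exact hG6
  -- main part 1
  have main : ∀ σ : Equiv.Perm (Fin (m + 1)), Allowable σ τ → Contains p2431 σ := by
    intro σ hσ
    set q : ℕ → ℕ := fun v => ((σ.symm (F v) : Fin (m+1)) : ℕ) with hqdef
    have hall : ∀ a b, PQ τ (F a) (F b) → q a < q b := by
      intro a b h; exact Fin.lt_def.mp (hσ _ _ h)
    have hq : ∀ a b, a ≤ m → b ≤ m → q a < q b → σ.symm (F a) < σ.symm (F b) := by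
      intro a b _ _ h; exact Fin.lt_def.mpr h
    have hqne : ∀ a b, a ≤ m → b ≤ m → a ≠ b → q a ≠ q b := by
      intro a b ha hb hne he
      apply hne
      have : σ.symm (F a) = σ.symm (F b) := Fin.ext he
      have : F a = F b := σ.symm.injective this
      have := congrArg Fin.val this
      rwa [hF a ha, hF b hb] at this
    have c24 : q (m-1) < q (m-2) := hall _ _ hG4
    have c42 : q (m-2) < q (m-4) := hall _ _ hG5
    have c30 : q 3 < q 0 := hall _ _ hG2
    have c1m1 : q 1 < q (m-1) := hall _ _ hG3
    rcases lt_trichotomy (q (m-3)) (q (m-1)) with hA | hA | hA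
    · -- chain (m-3, m-1, m-2, m-4)
      exact chain_contains σ (F (m-3)) (F (m-1)) (F (m-2)) (F (m-4))
        ((hFlt _ _ (by omega) (by omega)).mpr (by omega))
        ((hFlt _ _ (by omega) (by omega)).mpr (by omega))
        ((hFlt _ _ (by omega) (by omega)).mpr (by omega))
        (hq _ _ (by omega) (by omega) hA) (hq _ _ (by omega) (by omega) c24)
        (hq _ _ (by omega) (by omega) c42)
    · exact absurd hA (hqne _ _ (by omega) (by omega) (by omega))
    · -- q (m-1) < q (m-3)
      rcases lt_trichotomy (q (m-1)) (q 3) with hB | hB | hB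
      · exact chain_contains σ (F 1) (F (m-1)) (F 3) (F 0)
          ((hFlt _ _ (by omega) (by omega)).mpr (by omega))
          ((hFlt _ _ (by omega) (by omega)).mpr (by omega))
          ((hFlt _ _ (by omega) (by omega)).mpr (by omega))
          (hq _ _ (by omega) (by omega) c1m1) (hq _ _ (by omega) (by omega) hB)
          (hq _ _ (by omega) (by omega) c30)
      · exact absurd hB (hqne _ _ (by omega) (by omega) (by omega))
      · -- q 3 < q (m-1) : find maximal odd j
        have find : ∀ d j, j % 2 = 1 → 3 ≤ j → j + d = m - 3 → q j < q (m-1) →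
            ∃ j', j' % 2 = 1 ∧ 3 ≤ j' ∧ j' + 2 ≤ m - 3 ∧ q j' < q (m-1) ∧ q (m-1) < q (j'+2) := by
          intro d
          induction d using Nat.strong_induction_on with
          | _ d ih =>
            intro j hj1 hj2 hj3 hj4
            rcases Nat.eq_zero_or_pos d with hd | hd
            · exfalso
              have : j = m - 3 := by omega
              rw [this] at hj4
              exact absurd hj4 (lt_asymm hA)
            · have hdge : 2 ≤ d := by omega
              have hjle : j + 2 ≤ m - 3 := by omega
              rcases lt_trichotomy (q (m-1)) (q (j+2)) with hc | hc | hc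
              · exact ⟨j, hj1, hj2, hjle, hj4, hc⟩
              · exact absurd hc (hqne _ _ (by omega) (by omega) (by omega))
              · exact ih (d - 2) (by omega) (j + 2) (by omega) (by omega) (by omega) hc
        obtain ⟨j, hj1, hj2, hj3, hj4, hj5⟩ := find (m - 3 - 3) 3 (by omega) le_rfl (by omega) hB
        have hG7j : q (j + 2) < q (j - 1) := hall _ _ (hG7 j hj1 hj2 (by omega))
        exact chain_contains σ (F j) (F (m-1)) (F (j+2)) (F (j-1))
          ((hFlt _ _ (by omega) (by omega)).mpr (by omega))
          ((hFlt _ _ (by omega) (by omega)).mpr (by omega))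
          ((hFlt _ _ (by omega) (by omega)).mpr (by omega))
          (hq _ _ (by omega) (by omega) hj4) (hq _ _ (by omega) (by omega) hj5)
          (hq _ _ (by omega) (by omega) hG7j)
  refine ⟨main, ?_⟩
  rintro ⟨σ, hσC, hall⟩
  exact hσC ⟨4, p2431⟩ rfl (main σ hall)
end

section
/- For every even m ≥ 6, every permutation that is properly contained in τ_m (i.e., contained in τ_m as a pattern and of strictly smaller length) belongs to Av(2431)𝒜; equivalently, for every such proper subpermutation τ′ of τ_m, the poset P(τ′) has a linear extension avoiding the pattern 2431. -/

def posFn (m v : ℕ) : ℕ :=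
  if v = 1 then 0 else if v = m then 1 else if v = m - 1 then m - 3
  else if v = m - 6 then m - 2 else if v = m - 2 then m - 1 else if v = m - 4 then m
  else if v % 2 = 1 then v - 1 else v + 3

def rkFn (m E v : ℕ) : ℕ :=
  if v = m then 0 else if v = m - 1 then 2 * E + 1 else if v = m - 4 then 2 * m + 6
  else if v % 2 = 1 then 2 * v else 2 * v + 8

lemma tau_0 (m : ℕ) : tauFun m 0 = 1 := by unfold tauFun; split_ifs <;> first | omega | exact False.elim (by assumption)
lemma tau_1 (m : ℕ) (hm : 6 ≤ m) (hme : m % 2 = 0) : tauFun m 1 = m := by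
  unfold tauFun; split_ifs <;> first | omega | exact False.elim (by assumption)
lemma tau_m4 (m : ℕ) (hm : 6 ≤ m) (hme : m % 2 = 0) : tauFun m (m-4) = m-3 := by
  unfold tauFun; split_ifs <;> first | omega | exact False.elim (by assumption)
lemma tau_m3 (m : ℕ) (hm : 6 ≤ m) (hme : m % 2 = 0) : tauFun m (m-3) = m-1 := by
  unfold tauFun; split_ifs <;> first | omega | exact False.elim (by assumption)
lemma tau_m2 (m : ℕ) (hm : 6 ≤ m) (hme : m % 2 = 0) : tauFun m (m-2) = m-6 := by
  unfold tauFun; split_ifs <;> first | omega | exact False.elim (by assumption)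
lemma tau_m1 (m : ℕ) (hm : 6 ≤ m) (hme : m % 2 = 0) : tauFun m (m-1) = m-2 := by
  unfold tauFun; split_ifs <;> first | omega | exact False.elim (by assumption)
lemma tau_m (m : ℕ) (hm : 6 ≤ m) (hme : m % 2 = 0) : tauFun m m = m-4 := by
  unfold tauFun; split_ifs <;> first | omega | exact False.elim (by assumption)
lemma tau_even (m p : ℕ) (hm : 6 ≤ m) (hme : m % 2 = 0) (h2 : 2 ≤ p) (hp : p ≤ m - 6)
    (he : p % 2 = 0) : tauFun m p = p + 1 := by
  unfold tauFun; split_ifs <;> first | omega | exact False.elim (by assumption)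
lemma tau_odd (m p : ℕ) (hm : 6 ≤ m) (hme : m % 2 = 0) (h2 : 3 ≤ p) (hp : p ≤ m - 5)
    (he : p % 2 = 1) : tauFun m p = p - 3 := by
  unfold tauFun; split_ifs <;> first | omega | exact False.elim (by assumption)

lemma pos_1 (m : ℕ) : posFn m 1 = 0 := by unfold posFn; split_ifs <;> first | omega | exact False.elim (by assumption)
lemma pos_m (m : ℕ) (hm : 6 ≤ m) (hme : m % 2 = 0) : posFn m m = 1 := by
  unfold posFn; split_ifs <;> first | omega | exact False.elim (by assumption)
lemma pos_m1 (m : ℕ) (hm : 6 ≤ m) (hme : m % 2 = 0) : posFn m (m-1) = m-3 := by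
  unfold posFn; split_ifs <;> first | omega | exact False.elim (by assumption)
lemma pos_m6 (m : ℕ) (hm : 6 ≤ m) (hme : m % 2 = 0) : posFn m (m-6) = m-2 := by
  unfold posFn; split_ifs <;> first | omega | exact False.elim (by assumption)
lemma pos_m2 (m : ℕ) (hm : 6 ≤ m) (hme : m % 2 = 0) : posFn m (m-2) = m-1 := by
  unfold posFn; split_ifs <;> first | omega | exact False.elim (by assumption)
lemma pos_m4 (m : ℕ) (hm : 6 ≤ m) (hme : m % 2 = 0) : posFn m (m-4) = m := by
  unfold posFn; split_ifs <;> first | omega | exact False.elim (by assumption)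
lemma pos_odd (m v : ℕ) (hm : 6 ≤ m) (hme : m % 2 = 0) (h2 : 3 ≤ v) (hp : v ≤ m - 3)
    (he : v % 2 = 1) : posFn m v = v - 1 := by
  unfold posFn; split_ifs <;> first | omega | exact False.elim (by assumption)
lemma pos_even (m v : ℕ) (hm : 6 ≤ m) (hme : m % 2 = 0) (hp : v ≤ m - 8)
    (hne : ¬ v = m - 6) (he : v % 2 = 0) : posFn m v = v + 3 := by
  unfold posFn; split_ifs <;> first | omega | exact False.elim (by assumption)

lemma rk_m (m E : ℕ) : rkFn m E m = 0 := by unfold rkFn; split_ifs <;> first | omega | exact False.elim (by assumption)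
lemma rk_m1 (m E : ℕ) (hm : 6 ≤ m) (hme : m % 2 = 0) : rkFn m E (m-1) = 2*E+1 := by
  unfold rkFn; split_ifs <;> first | omega | exact False.elim (by assumption)
lemma rk_m4 (m E : ℕ) (hm : 6 ≤ m) (hme : m % 2 = 0) : rkFn m E (m-4) = 2*m+6 := by
  unfold rkFn; split_ifs <;> first | omega | exact False.elim (by assumption)
lemma rk_odd (m E v : ℕ) (hm : 6 ≤ m) (hme : m % 2 = 0) (hv : v ≤ m) (h1 : ¬ v = m-1)
    (he : v % 2 = 1) : rkFn m E v = 2*v := by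
  unfold rkFn; split_ifs <;> first | omega | exact False.elim (by assumption)
lemma rk_even (m E v : ℕ) (hm : 6 ≤ m) (hme : m % 2 = 0) (hv : v ≤ m) (h1 : ¬ v = m)
    (h2 : ¬ v = m-4) (he : v % 2 = 0) : rkFn m E v = 2*v+8 := by
  unfold rkFn; split_ifs <;> first | omega | exact False.elim (by assumption)

lemma posrkSpec (m E v : ℕ) (hm : 6 ≤ m) (hme : m % 2 = 0) (hv : v ≤ m) :
    (v = 1 ∧ posFn m v = 0 ∧ rkFn m E v = 2) ∨
    (v = m ∧ posFn m v = 1 ∧ rkFn m E v = 0) ∨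
    (v = m - 1 ∧ posFn m v = m - 3 ∧ rkFn m E v = 2 * E + 1) ∨
    (v = m - 6 ∧ posFn m v = m - 2 ∧ rkFn m E v = 2 * m - 4) ∨
    (v = m - 2 ∧ posFn m v = m - 1 ∧ rkFn m E v = 2 * m + 4) ∨
    (v = m - 4 ∧ posFn m v = m ∧ rkFn m E v = 2 * m + 6) ∨
    (v % 2 = 1 ∧ 3 ≤ v ∧ v ≤ m - 3 ∧ posFn m v = v - 1 ∧ rkFn m E v = 2 * v) ∨
    (v % 2 = 0 ∧ v ≤ m - 8 ∧ ¬ v = m - 6 ∧ posFn m v = v + 3 ∧ rkFn m E v = 2 * v + 8) := by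
  have hcl : v = 1 ∨ v = m ∨ v = m-1 ∨ v = m-6 ∨ v = m-2 ∨ v = m-4 ∨
      (v % 2 = 1 ∧ 3 ≤ v ∧ v ≤ m-3) ∨ (v % 2 = 0 ∧ v ≤ m-8 ∧ ¬ v = m-6) := by omega
  rcases hcl with h|h|h|h|h|h|⟨h1,h2,h3⟩|⟨h1,h2,h3⟩
  · refine Or.inl ⟨h, ?_, ?_⟩
    · rw [h]; exact pos_1 m
    · rw [h]; have := rk_odd m E 1 hm hme (by omega) (by omega) (by omega); omega
  · exact Or.inr (Or.inl ⟨h, by rw [h]; exact pos_m m hm hme, by rw [h]; exact rk_m m E⟩)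
  · exact Or.inr (Or.inr (Or.inl ⟨h, by rw [h]; exact pos_m1 m hm hme,
      by rw [h]; exact rk_m1 m E hm hme⟩))
  · refine Or.inr (Or.inr (Or.inr (Or.inl ⟨h, by rw [h]; exact pos_m6 m hm hme, ?_⟩)))
    rw [h]; have := rk_even m E (m-6) hm hme (by omega) (by omega) (by omega) (by omega)
    omega
  · refine Or.inr (Or.inr (Or.inr (Or.inr (Or.inl
      ⟨h, by rw [h]; exact pos_m2 m hm hme, ?_⟩))))
    rw [h]; have := rk_even m E (m-2) hm hme (by omega) (by omega) (by omega) (by omega)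
    omega
  · exact Or.inr (Or.inr (Or.inr (Or.inr (Or.inr (Or.inl
      ⟨h, by rw [h]; exact pos_m4 m hm hme, by rw [h]; exact rk_m4 m E hm hme⟩)))))
  · exact Or.inr (Or.inr (Or.inr (Or.inr (Or.inr (Or.inr (Or.inl
      ⟨h1, h2, h3, pos_odd m v hm hme h2 h3 h1,
       rk_odd m E v hm hme (by omega) (by omega) h1⟩))))))
  · exact Or.inr (Or.inr (Or.inr (Or.inr (Or.inr (Or.inr (Or.inr
      ⟨h1, h2, h3, pos_even m v hm hme h2 h3 h1,
       rk_even m E v hm hme (by omega) (by omega) (by omega) h1⟩))))))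

lemma rkSpec (m E v : ℕ) (hm : 6 ≤ m) (hme : m % 2 = 0) (hv : v ≤ m) :
    (v = m ∧ rkFn m E v = 0) ∨ (v = m-1 ∧ rkFn m E v = 2*E+1) ∨
    (v = m-4 ∧ rkFn m E v = 2*m+6) ∨
    (v % 2 = 1 ∧ v ≤ m-1 ∧ ¬ v = m-1 ∧ rkFn m E v = 2*v) ∨
    (v % 2 = 0 ∧ v ≤ m-2 ∧ ¬ v = m-4 ∧ rkFn m E v = 2*v+8) := by
  have hcl : v = m ∨ v = m-1 ∨ v = m-4 ∨ (v % 2 = 1 ∧ v ≤ m-1 ∧ ¬v = m-1) ∨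
      (v % 2 = 0 ∧ v ≤ m-2 ∧ ¬v = m-4) := by omega
  rcases hcl with h|h|h|⟨h1,h2,h3⟩|⟨h1,h2,h3⟩
  · exact Or.inl ⟨h, by rw [h]; exact rk_m m E⟩
  · exact Or.inr (Or.inl ⟨h, by rw [h]; exact rk_m1 m E hm hme⟩)
  · exact Or.inr (Or.inr (Or.inl ⟨h, by rw [h]; exact rk_m4 m E hm hme⟩))
  · exact Or.inr (Or.inr (Or.inr (Or.inl ⟨h1, h2, h3,
      rk_odd m E v hm hme (by omega) h3 h1⟩)))
  · exact Or.inr (Or.inr (Or.inr (Or.inr ⟨h1, h2, h3,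
      rk_even m E v hm hme (by omega) (by omega) h3 h1⟩)))

lemma pos_inv (m v : ℕ) (hm : 6 ≤ m) (hme : m % 2 = 0) (hv : v ≤ m) :
    posFn m v ≤ m ∧ tauFun m (posFn m v) = v := by
  have hcl : v = 1 ∨ v = m ∨ v = m-1 ∨ v = m-6 ∨ v = m-2 ∨ v = m-4 ∨ v = m-3 ∨
      (v % 2 = 1 ∧ 3 ≤ v ∧ v ≤ m-5) ∨ (v % 2 = 0 ∧ v ≤ m-8 ∧ ¬ v = m-6) := by omega
  rcases hcl with h|h|h|h|h|h|h|⟨h1,h2,h3⟩|⟨h1,h2,h3⟩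
  · rw [h, pos_1]; exact ⟨by omega, tau_0 m⟩
  · rw [h, pos_m m hm hme]; exact ⟨by omega, by rw [tau_1 m hm hme]⟩
  · rw [h, pos_m1 m hm hme]; exact ⟨by omega, by rw [tau_m3 m hm hme]⟩
  · rw [h, pos_m6 m hm hme]; exact ⟨by omega, by rw [tau_m2 m hm hme]⟩
  · rw [h, pos_m2 m hm hme]; exact ⟨by omega, by rw [tau_m1 m hm hme]⟩
  · rw [h, pos_m4 m hm hme]; exact ⟨by omega, by rw [tau_m m hm hme]⟩
  · rw [h, pos_odd m (m-3) hm hme (by omega) (by omega) (by omega)]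
    have h4 : m - 3 - 1 = m - 4 := by omega
    rw [h4]
    exact ⟨by omega, by rw [tau_m4 m hm hme]⟩
  · rw [pos_odd m v hm hme h2 (by omega) h1]
    refine ⟨by omega, ?_⟩
    rw [tau_even m (v-1) hm hme (by omega) (by omega) (by omega)]
    omega
  · rw [pos_even m v hm hme h2 h3 h1]
    refine ⟨by omega, ?_⟩
    rw [tau_odd m (v+3) hm hme (by omega) (by omega) (by omega)]
    omega
lemma rk_inj (m E v w : ℕ) (hm : 6 ≤ m) (hme : m % 2 = 0) (hv : v ≤ m) (hw : w ≤ m)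
    (h : rkFn m E v = rkFn m E w) : v = w := by
  have s1 := rkSpec m E v hm hme hv
  have s2 := rkSpec m E w hm hme hw
  omega

lemma lemI (m E vp x y : ℕ) (hm : 6 ≤ m) (hme : m % 2 = 0) (hE : E ≤ m-3)
    (hE0 : E = 0 → vp = m)
    (hx : x ≤ m) (hy : y ≤ m) (hxp : ¬ x = vp) (hyp : ¬ y = vp)
    (hpos : posFn m x < posFn m y)
    (hor : y < x ∨ ∃ z, z ≤ m ∧ ¬ z = vp ∧ posFn m x < posFn m z ∧
      posFn m z < posFn m y ∧ x < y ∧ y < z) :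
    rkFn m E x < rkFn m E y := by
  have sx := posrkSpec m E x hm hme hx
  have sy := posrkSpec m E y hm hme hy
  rcases hor with h | ⟨z, hz, hzp, hz1, hz2, hz3, hz4⟩
  · omega
  · have sz := posrkSpec m E z hm hme hz
    omega

lemma lemII (m E vp v1 v2 v3 v4 : ℕ) (hm : 6 ≤ m) (hme : m % 2 = 0)
    (hcase : (vp % 2 = 1 ∧ vp ≤ m-5 ∧ E = vp+1) ∨
             (vp % 2 = 0 ∧ 8 ≤ m ∧ vp ≤ m-8 ∧ E = vp+2) ∨
             (vp = m ∧ E = 0) ∨ (vp = m-3 ∧ E = m-3) ∨ (vp = m-1 ∧ E = m-3) ∨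
             (vp = m-6 ∧ E = m-4) ∨ (vp = m-2 ∧ E = m-3) ∨ (vp = m-4 ∧ E = m-3))
    (h1 : v1 ≤ m) (h2 : v2 ≤ m) (h3 : v3 ≤ m) (h4 : v4 ≤ m)
    (n1 : ¬ v1 = vp) (n2 : ¬ v2 = vp) (n3 : ¬ v3 = vp) (n4 : ¬ v4 = vp)
    (r12 : rkFn m E v1 < rkFn m E v2) (r23 : rkFn m E v2 < rkFn m E v3)
    (r34 : rkFn m E v3 < rkFn m E v4)
    (o41 : v4 < v1) (o13 : v1 < v3) (o32 : v3 < v2) : False := by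
  have s1 := rkSpec m E v1 hm hme h1
  have s2 := rkSpec m E v2 hm hme h2
  have s3 := rkSpec m E v3 hm hme h3
  have s4 := rkSpec m E v4 hm hme h4
  rcases hcase with ⟨a,b,c⟩|⟨a,b,c,d⟩|⟨a,b⟩|⟨a,b⟩|⟨a,b⟩|⟨a,b⟩|⟨a,b⟩|⟨a,b⟩ <;> omega

lemma glue (m q : ℕ) (hm : 6 ≤ m) (hme : m % 2 = 0) (hq : q ≤ m) :
    ∃ E, E ≤ m-3 ∧ (E = 0 → tauFun m q = m) ∧
      ((tauFun m q % 2 = 1 ∧ tauFun m q ≤ m-5 ∧ E = tauFun m q + 1) ∨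
       (tauFun m q % 2 = 0 ∧ 8 ≤ m ∧ tauFun m q ≤ m-8 ∧ E = tauFun m q + 2) ∨
       (tauFun m q = m ∧ E = 0) ∨ (tauFun m q = m-3 ∧ E = m-3) ∨
       (tauFun m q = m-1 ∧ E = m-3) ∨ (tauFun m q = m-6 ∧ E = m-4) ∨
       (tauFun m q = m-2 ∧ E = m-3) ∨ (tauFun m q = m-4 ∧ E = m-3)) := by
  have hclq : q = 0 ∨ q = 1 ∨ (2 ≤ q ∧ q ≤ m-6 ∧ q % 2 = 0) ∨
      (3 ≤ q ∧ q ≤ m-5 ∧ q % 2 = 1) ∨ q = m-4 ∨ q = m-3 ∨ q = m-2 ∨ q = m-1 ∨ q = m := by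
    omega
  rcases hclq with h|h|⟨ha,hb,hc⟩|⟨ha,hb,hc⟩|h|h|h|h|h
  · rw [h, tau_0]
    exact ⟨2, by omega, by omega, Or.inl ⟨by omega, by omega, by omega⟩⟩
  · rw [h, tau_1 m hm hme]
    exact ⟨0, by omega, fun _ => rfl, Or.inr (Or.inr (Or.inl ⟨rfl, rfl⟩))⟩
  · rw [tau_even m q hm hme ha hb hc]
    exact ⟨q+2, by omega, by omega, Or.inl ⟨by omega, by omega, by omega⟩⟩
  · rw [tau_odd m q hm hme ha hb hc]
    exact ⟨q-1, by omega, by omega, Or.inr (Or.inl ⟨by omega, by omega, by omega, by omega⟩)⟩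
  · rw [h, tau_m4 m hm hme]
    exact ⟨m-3, by omega, by omega, by omega⟩
  · rw [h, tau_m3 m hm hme]
    exact ⟨m-3, by omega, by omega, by omega⟩
  · rw [h, tau_m2 m hm hme]
    exact ⟨m-4, by omega, by omega, by omega⟩
  · rw [h, tau_m1 m hm hme]
    exact ⟨m-3, by omega, by omega, by omega⟩
  · rw [h, tau_m m hm hme]
    exact ⟨m-3, by omega, by omega, by omega⟩

lemma reduction {k n : ℕ} (τ' : Equiv.Perm (Fin k)) (τ : Equiv.Perm (Fin n))
    (f : Fin k ↪o Fin n) (hf : ∀ i j, τ' i < τ' j ↔ τ (f i) < τ (f j))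
    (r : Fin n → ℕ) (K : Set (Fin n)) (hK : ∀ i, τ (f i) ∈ K)
    (hinj : ∀ x ∈ K, ∀ y ∈ K, r x = r y → x = y)
    (hr1 : ∀ x ∈ K, ∀ y ∈ K, τ.symm x < τ.symm y →
        (y < x ∨ ∃ z ∈ K, τ.symm x < τ.symm z ∧ τ.symm z < τ.symm y ∧ x < y ∧ y < z) →
        r x < r y)
    (hr2 : ∀ v1 ∈ K, ∀ v2 ∈ K, ∀ v3 ∈ K, ∀ v4 ∈ K,
        r v1 < r v2 → r v2 < r v3 → r v3 < r v4 → v4 < v1 → v1 < v3 → v3 < v2 → False) :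
    ∃ σ : Equiv.Perm (Fin k), Allowable σ τ' ∧ ¬ Contains p2431 σ := by
  classical
  set ι : Fin k → Fin n := fun x => τ (f (τ'.symm x)) with hι
  have hιK : ∀ x, ι x ∈ K := fun x => hK _
  have hιlt : ∀ a b : Fin k, a < b ↔ ι a < ι b := by
    intro a b
    have := hf (τ'.symm a) (τ'.symm b)
    simpa using this
  have hιsymm : ∀ a, τ.symm (ι a) = f (τ'.symm a) := fun a => Equiv.symm_apply_apply _ _
  set R : Fin k → ℕ := fun a => r (ι a) with hR
  have hιinj : Function.Injective ι := by
    intro a b hab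
    exact τ'.symm.injective (f.injective (τ.injective hab))
  have hRinj : Function.Injective R := by
    intro a b hab
    exact hιinj (hinj _ (hιK a) _ (hιK b) hab)
  set s : Finset ℕ := Finset.image R Finset.univ with hs
  have hcard : s.card = k := by
    rw [hs, Finset.card_image_of_injective _ hRinj, Finset.card_univ, Fintype.card_fin]
  set e := s.orderIsoOfFin hcard with he
  set g : Fin k → Fin k :=
    fun a => e.symm ⟨R a, Finset.mem_image_of_mem R (Finset.mem_univ a)⟩ with hg
  have hglt : ∀ a b, g a < g b ↔ R a < R b := by
    intro a b
    rw [hg]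
    rw [e.symm.lt_iff_lt]
    exact Subtype.mk_lt_mk
  have hginj : Function.Injective g := by
    intro a b hab
    have : R a < R b ∨ R b < R a ∨ R a = R b := by omega
    rcases this with h|h|h
    · exact absurd ((hglt a b).mpr h) (by rw [hab]; exact lt_irrefl _)
    · exact absurd ((hglt b a).mpr h) (by rw [hab]; exact lt_irrefl _)
    · exact hRinj h
  have hgbij : Function.Bijective g := Finite.injective_iff_bijective.mp hginj
  set σ : Equiv.Perm (Fin k) := (Equiv.ofBijective g hgbij).symm with hσ
  have hσsymm : ∀ a, σ.symm a = g a := fun a => rfl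
  have base : ∀ a b, PQBase τ' a b → R a < R b := by
    intro a b hab
    obtain ⟨hpos, hor⟩ := hab
    refine hr1 _ (hιK a) _ (hιK b) ?_ ?_
    · rw [hιsymm, hιsymm]
      exact f.lt_iff_lt.mpr hpos
    · rcases hor with h | ⟨c, hc1, hc2, hc3, hc4⟩
      · exact Or.inl ((hιlt b a).mp h)
      · refine Or.inr ⟨ι c, hιK c, ?_, ?_, (hιlt a b).mp hc3, (hιlt b c).mp hc4⟩
        · rw [hιsymm, hιsymm]; exact f.lt_iff_lt.mpr hc1
        · rw [hιsymm, hιsymm]; exact f.lt_iff_lt.mpr hc2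
  have key : ∀ a b, PQ τ' a b → R a < R b := by
    intro a b h
    induction h with
    | single h => exact base _ _ h
    | tail _ h ih => exact lt_trans ih (base _ _ h)
  refine ⟨σ, ?_, ?_⟩
  · intro x y h
    rw [hσsymm, hσsymm]
    exact (hglt x y).mpr (key x y h)
  · rintro ⟨g4, hg4⟩
    have hval0 : p2431 0 = 1 := rfl
    have hval1 : p2431 1 = 3 := rfl
    have hval2 : p2431 2 = 2 := rfl
    have hval3 : p2431 3 = 0 := rfl
    have e01 : σ (g4 0) < σ (g4 1) := (hg4 0 1).mp (by rw [hval0, hval1]; decide)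
    have e21 : σ (g4 2) < σ (g4 1) := (hg4 2 1).mp (by rw [hval2, hval1]; decide)
    have e02 : σ (g4 0) < σ (g4 2) := (hg4 0 2).mp (by rw [hval0, hval2]; decide)
    have e30 : σ (g4 3) < σ (g4 0) := (hg4 3 0).mp (by rw [hval3, hval0]; decide)
    have hgs : ∀ i : Fin 4, g (σ (g4 i)) = g4 i := by
      intro i
      rw [← hσsymm]
      exact σ.symm_apply_apply _
    have hrk : ∀ i j : Fin 4, i < j → R (σ (g4 i)) < R (σ (g4 j)) := by
      intro i j hij
      refine (hglt _ _).mp ?_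
      rw [hgs, hgs]
      exact g4.lt_iff_lt.mpr hij
    exact hr2 (ι (σ (g4 0))) (hιK _) (ι (σ (g4 1))) (hιK _) (ι (σ (g4 2))) (hιK _)
      (ι (σ (g4 3))) (hιK _)
      (hrk 0 1 (by decide)) (hrk 1 2 (by decide)) (hrk 2 3 (by decide))
      ((hιlt _ _).mp e30) ((hιlt _ _).mp e02) ((hιlt _ _).mp e21)

/-- For every even `m ≥ 6`, every permutation properly contained in `τ_m` belongs to
`Av(2431)𝒜`; equivalently, the poset of every proper subpermutation of `τ_m` has a
linear extension avoiding `2431`. -/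
theorem proper_subperm_tau_mem_imageA_av2431 (m : ℕ) (hm : 6 ≤ m) (hme : Even m)
    (τ : Equiv.Perm (Fin (m + 1))) (hτ : ∀ p : Fin (m + 1), (τ p : ℕ) = tauFun m p)
    {k : ℕ} (τ' : Equiv.Perm (Fin k)) (hk : k < m + 1) (hc : Contains τ' τ) :
    (⟨k, τ'⟩ : PermSig) ∈ ImageA (Av {(⟨4, p2431⟩ : PermSig)}) ∧
    ∃ σ : Equiv.Perm (Fin k), Allowable σ τ' ∧ ¬ Contains p2431 σ := by
  have hme' : m % 2 = 0 := Nat.even_iff.mp hme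
  obtain ⟨f, hf⟩ := hc
  have hex : ∃ p : Fin (m+1), ∀ i : Fin k, f i ≠ p := by
    by_contra hcon
    push_neg at hcon
    have hs : Function.Surjective f := fun p => hcon p
    have := Fintype.card_le_of_surjective f hs
    simp only [Fintype.card_fin] at this
    omega
  obtain ⟨p, hp⟩ := hex
  have hpm : (p : ℕ) ≤ m := Nat.lt_succ_iff.mp p.isLt
  obtain ⟨E, hE3, hE0, hcase⟩ := glue m p.1 hm hme' hpm
  have hτp : (τ p : ℕ) = tauFun m p.1 := hτ p
  set K : Set (Fin (m+1)) := {v | v ≠ τ p} with hKdef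
  have hK : ∀ i, τ (f i) ∈ K := by
    intro i
    intro hcontra
    exact hp i (τ.injective hcontra)
  have hv : ∀ v : Fin (m+1), (v : ℕ) ≤ m := fun v => Nat.lt_succ_iff.mp v.isLt
  have hKval : ∀ v : Fin (m+1), v ∈ K → ¬ (v : ℕ) = tauFun m p.1 := by
    intro v hvK hcontra
    exact hvK (Fin.ext (by rw [hcontra, ← hτp]))
  have hsymm : ∀ v : Fin (m+1), ((τ.symm v : Fin (m+1)) : ℕ) = posFn m (v : ℕ) := by
    intro v
    obtain ⟨hle, heq⟩ := pos_inv m v.1 hm hme' (hv v)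
    have h2 : τ ⟨posFn m v.1, Nat.lt_succ_of_le hle⟩ = v := Fin.ext (by rw [hτ]; exact heq)
    have h3 : τ.symm (τ ⟨posFn m v.1, Nat.lt_succ_of_le hle⟩) = τ.symm v := by rw [h2]
    rw [Equiv.symm_apply_apply] at h3
    rw [← h3]
  have hmain := reduction τ' τ f hf (fun v => rkFn m E (v : ℕ)) K hK
    (fun x hx y hy hxy => Fin.ext (rk_inj m E x.1 y.1 hm hme' (hv x) (hv y) hxy))
    (by
      intro x hx y hy hlt hor
      show rkFn m E x.1 < rkFn m E y.1
      apply lemI m E (tauFun m p.1) x.1 y.1 hm hme' hE3 hE0 (hv x) (hv y)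
        (hKval x hx) (hKval y hy)
      · rw [← hsymm, ← hsymm]
        exact hlt
      · rcases hor with h | ⟨z, hzK, hz1, hz2, hz3, hz4⟩
        · exact Or.inl h
        · refine Or.inr ⟨z.1, hv z, hKval z hzK, ?_, ?_, hz3, hz4⟩
          · rw [← hsymm, ← hsymm]; exact hz1
          · rw [← hsymm, ← hsymm]; exact hz2)
    (by
      intro v1 h1 v2 h2 v3 h3 v4 h4 r12 r23 r34 o41 o13 o32
      exact lemII m E (tauFun m p.1) v1.1 v2.1 v3.1 v4.1 hm hme' hcase
        (hv v1) (hv v2) (hv v3) (hv v4)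
        (hKval v1 h1) (hKval v2 h2) (hKval v3 h3) (hKval v4 h4)
        r12 r23 r34 o41 o13 o32)
  obtain ⟨σ, hallow, havoid⟩ := hmain
  constructor
  · refine ⟨σ, ?_, hallow⟩
    intro β hβ
    rw [Set.mem_singleton_iff] at hβ
    subst hβ
    exact havoid
  · exact ⟨σ, hallow, havoid⟩
end

section
/- For every k ≥ 1, if ι_k denotes the increasing permutation 1 2 ⋯ k, then 𝒜 Av(ι_k) = Av(ι_k); that is, the set of permutations that a priority queue can transform into some ι_k-avoiding permutation is exactly the set of ι_k-avoiding permutations. -/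
/-- `𝒜C`: the set of permutations that a priority queue can transform into some
member of `C`. -/
def PreimageA (C : Set PermSig) : Set PermSig :=
  {σ : PermSig | ∃ τ : Equiv.Perm (Fin σ.1), (⟨σ.1, τ⟩ : PermSig) ∈ C ∧ Allowable σ.2 τ}

/-!
Each generating relation `x ≺ y` of `P(τ)` puts `x` before `y` in `τ`, so `(σ, σ)` is always
allowable and `Av(ι_k) ⊆ 𝒜 Av(ι_k)`. Conversely, an allowable pair `(σ, τ)` keeps every
increasing pair of `σ` in the same order in `τ`: if the larger value came first in `τ`, the
pair would be a generating relation of `P(τ)` that `σ` violates. Hence an occurrence of `ι_k`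
in `σ` gives one in `τ`.
-/

variable {n : ℕ} {σ τ : Equiv.Perm (Fin n)}

theorem PQ.symm_lt_symm {x y : Fin n} (h : PQ τ x y) : τ.symm x < τ.symm y :=
  h.trans_induction_on (fun hb => hb.1) fun _ _ => lt_trans

theorem allowable_refl (σ : Equiv.Perm (Fin n)) : Allowable σ σ :=
  fun _ _ => PQ.symm_lt_symm

theorem Allowable.symm_lt_symm_of_lt (hσ : Allowable σ τ) {x y : Fin n} (hxy : x < y)
    (hσxy : σ.symm x < σ.symm y) : τ.symm x < τ.symm y := by
  refine lt_of_le_of_ne (not_lt.1 fun hτyx => ?_) (τ.symm.injective.ne hxy.ne)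
  exact (hσ y x (.single ⟨hτyx, .inl hxy⟩)).not_gt hσxy

theorem contains_one_iff {k : ℕ} (τ : Equiv.Perm (Fin n)) :
    Contains (1 : Equiv.Perm (Fin k)) τ ↔ ∃ f : Fin k ↪o Fin n, StrictMono (τ ∘ f) :=
  ⟨fun ⟨f, hf⟩ => ⟨f, fun i j hij => (hf i j).1 hij⟩,
    fun ⟨f, hf⟩ => ⟨f, fun _ _ => hf.lt_iff_lt.symm⟩⟩

theorem Allowable.contains_one {k : ℕ} (hσ : Allowable σ τ)
    (h : Contains (1 : Equiv.Perm (Fin k)) σ) : Contains (1 : Equiv.Perm (Fin k)) τ := by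
  obtain ⟨f, hf⟩ := (contains_one_iff σ).1 h
  have hpos : StrictMono fun i => τ.symm (σ (f i)) := fun i j hij =>
    hσ.symm_lt_symm_of_lt (hf hij) (by simpa using hij)
  exact (contains_one_iff τ).2 ⟨.ofStrictMono _ hpos, by simpa [Function.comp_def] using hf⟩

theorem preimageA_av_increasing_general (k : ℕ) :
    PreimageA (Av {⟨k, (1 : Equiv.Perm (Fin k))⟩}) =
      Av {⟨k, (1 : Equiv.Perm (Fin k))⟩} := by
  ext ⟨n, σ⟩
  constructor
  · rintro ⟨τ, hτ, hστ⟩ _ rfl hσ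
    exact hτ _ rfl (hστ.contains_one hσ)
  · exact fun hσ => ⟨σ, hσ, allowable_refl σ⟩

/-- For every `k ≥ 1`, if `ι_k` denotes the increasing (identity) permutation
`1 2 ⋯ k`, then `𝒜 Av(ι_k) = Av(ι_k)`. -/
theorem preimageA_av_increasing (k : ℕ) (hk : 1 ≤ k) :
    PreimageA (Av {⟨k, (1 : Equiv.Perm (Fin k))⟩}) =
      Av {⟨k, (1 : Equiv.Perm (Fin k))⟩} :=
  preimageA_av_increasing_general k
end
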